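/- arXiv:0902.3074 — 2 statements merged into one kernel-verified Lean document; each statement's English description precedes it below -/
import Mathlib

section
/- For all equivalent reduced n-expressions u, v of length ℓ, the combinatorial distance satisfies dist(u,v) ≤ (n-1)(n-2)ℓ. -/
/-!
Induction on `n`. Reading a reduced word from left to right, one keeps it, up to braid
relations, in the form `a ++ sji n d = a · s_{n-1} s_{n-2} ⋯ s_d` with `a` free of `s_{n-1}`.
The next letter `s_x` extends the block if `x = d - 1`; it commutes leftwards across the
block if `x ≤ d - 2`; if `x > d` it passes across the block as `s_{x-1}`, using commutations
and one braid relation `s_x s_{x-1} s_x = s_{x-1} s_x s_{x-1}`; and `x = d` would create a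
square, impossible in a reduced word. Each letter costs at most `n - 2` relations, so `u`
and `v` reach `a_u ++ sji n m` and `a_v ++ sji n m`, `m = wperm u n`, in `(n - 2)ℓ` relations
each. The prefixes are reduced, since a letter changes the number of inversions by at most
one, and they are equivalent `(n-1)`-expressions of length at most `ℓ`; by induction they
are at most `(n - 2)(n - 3)ℓ` apart, and `2(n - 2) + (n - 2)(n - 3) = (n - 1)(n - 2)`.
-/

open scoped Classical

noncomputable section

/-- adjacent transposition `s i = (i, i+1)` acting on ℕ (1-indexed positions) -/
def s (i : ℕ) : Equiv.Perm ℕ := Equiv.swap i (i + 1)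

/-- permutation represented by a word; letters are applied left to right
(`wperm (u ++ v) = wperm v * wperm u`, i.e. `u` first, then `v`). -/
def wperm (w : List ℕ) : Equiv.Perm ℕ := ((w.map s).reverse).prod

/-- `w` is an `n`-expression: a word in the letters `s 1, ..., s (n-1)` -/
def IsExpr (n : ℕ) (w : List ℕ) : Prop := ∀ i ∈ w, 1 ≤ i ∧ i + 1 ≤ n

/-- set of inversions of a permutation of `{1,...,n}` -/
def invSet (n : ℕ) (π : Equiv.Perm ℕ) : Finset (ℕ × ℕ) :=
  (Finset.Icc 1 n ×ˢ Finset.Icc 1 n).filter (fun pq => pq.1 < pq.2 ∧ π pq.2 < π pq.1)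

/-- a reduced `n`-expression: its length equals the inversion number of the
permutation it represents -/
def ReducedExpr (n : ℕ) (w : List ℕ) : Prop :=
  IsExpr n w ∧ w.length = (invSet n (wperm w)).card

/-- one application of a braid relation `s i s j s i = s j s i s j`, `|i-j| = 1` -/
inductive StepI : List ℕ → List ℕ → Prop
  | mk (a b : List ℕ) (i j : ℕ) (h : i + 1 = j ∨ j + 1 = i) :
      StepI (a ++ i :: j :: i :: b) (a ++ j :: i :: j :: b)

/-- one application of a commutation relation `s i s j = s j s i`, `|i-j| ≥ 2` -/
inductive StepII : List ℕ → List ℕ → Prop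
  | mk (a b : List ℕ) (i j : ℕ) (h : i + 2 ≤ j ∨ j + 2 ≤ i) :
      StepII (a ++ i :: j :: b) (a ++ j :: i :: b)

def BraidStep (u v : List ℕ) : Prop := StepI u v ∨ StepII u v

/-- `c` is a derivation from `u` to `v` by braid relations -/
def IsDeriv (u v : List ℕ) (c : List (List ℕ)) : Prop :=
  c.Chain' BraidStep ∧ c.head? = some u ∧ c.getLast? = some v

/-- combinatorial distance: minimal number of braid relations transforming `u` into `v` -/
def dist (u v : List ℕ) : ℕ :=
  sInf {k | ∃ c, IsDeriv u v c ∧ c.length = k + 1}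

/-- the word `s_{j,i} = s_{j-1} s_{j-2} ... s_i` (empty if `j ≤ i`) -/
def sji (j i : ℕ) : List ℕ := (List.range (j - i)).map (fun k => j - 1 - k)

/-- the normal word `s_{1,f(1)} s_{2,f(2)} ... s_{n,f(n)}` -/
def normalWord (n : ℕ) (f : ℕ → ℕ) : List ℕ :=
  ((List.range n).map (fun k => sji (k + 1) (f (k + 1)))).flatten

/-- `f : {1,...,n} → {1,...,n}` with `1 ≤ f i ≤ i` for all `i` -/
def IsNormalFun (n : ℕ) (f : ℕ → ℕ) : Prop := ∀ i ∈ Finset.Icc 1 n, 1 ≤ f i ∧ f i ≤ i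

/-- names of the successive crossings: the name of a letter is the pair of starting
positions of the two strands crossing there -/
def namesAux : Equiv.Perm ℕ → List ℕ → List (Finset ℕ)
  | _, [] => []
  | π, i :: rest => ({π⁻¹ i, π⁻¹ (i + 1)} : Finset ℕ) :: namesAux (s i * π) rest

/-- the name sequence `S(w)` of a word -/
def names (w : List ℕ) : List (Finset ℕ) := namesAux 1 w

/-- two entries occur in the same relative order in `S` and `S'` -/
def sameOrder (S S' : List (Finset ℕ)) (a b : Finset ℕ) : Prop :=
  (S.idxOf a < S.idxOf b) ↔ (S'.idxOf a < S'.idxOf b)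

/-- `I₃(S,S')`: number of triples `{p,q,r} ⊆ {1,...,n}` such that the relative order of
the three pairs `{p,q}, {p,r}, {q,r}` is not the same in `S` and `S'` -/
def I3 (n : ℕ) (S S' : List (Finset ℕ)) : ℕ :=
  (((Finset.Icc 1 n).powersetCard 3).filter (fun t =>
    ¬ ∀ a ∈ t.powersetCard 2, ∀ b ∈ t.powersetCard 2, sameOrder S S' a b)).card

/-- `I₂,₂(S,S')`: number of unordered pairs of disjoint pairs in `{1,...,n}` whose
relative order is not the same in `S` and `S'` -/
def I22 (n : ℕ) (S S' : List (Finset ℕ)) : ℕ :=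
  ((((Finset.Icc 1 n).powersetCard 2).powersetCard 2).filter (fun P =>
    (∀ a ∈ P, ∀ b ∈ P, a ≠ b → Disjoint a b) ∧
    ¬ ∀ a ∈ P, ∀ b ∈ P, sameOrder S S' a b)).card

/-- total number of unordered pairs of entries whose relative order differs -/
def InvCount (S S' : List (Finset ℕ)) : ℕ :=
  ((S.toFinset.powersetCard 2).filter (fun P =>
    ¬ ∀ a ∈ P, ∀ b ∈ P, sameOrder S S' a b)).card

/-- number of type I steps in a derivation -/
def countStepsI (c : List (List ℕ)) : ℕ :=
  ((Finset.range (c.length - 1)).filter (fun k => StepI (c.getD k []) (c.getD (k + 1) []))).card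

/-- number of type II steps in a derivation -/
def countStepsII (c : List (List ℕ)) : ℕ :=
  ((Finset.range (c.length - 1)).filter (fun k => StepII (c.getD k []) (c.getD (k + 1) []))).card

/-- position of the strand starting at position `p` after the first `k` letters of `w` -/
def strandPos (w : List ℕ) (p k : ℕ) : ℕ := wperm (w.take k) p

/-- number of unit squares to the right of the `n`-th strand in the braid diagram of `w`,
drawn on an `(n-1) × length w` grid -/
def area (n : ℕ) (w : List ℕ) : ℕ :=
  ((List.range w.length).map (fun k => n - max (strandPos w n k) (strandPos w n (k + 1)))).sum

/-- `u_n = s_{1,1} s_{2,1} ... s_{n,1}` -/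
def uWord (n : ℕ) : List ℕ := ((List.range n).map (fun k => sji (k + 1) 1)).flatten

/-- `v_n = s_{n,1} s_{n,2} ... s_{n,n-1}` -/
def vWord (n : ℕ) : List ℕ := ((List.range (n - 1)).map (fun k => sji n (k + 1))).flatten

lemma s_apply (i x : ℕ) : s i x = if x = i then i + 1 else if x = i + 1 then i else x := by
  simp [s, Equiv.swap_apply_def]

lemma wperm_cons (i : ℕ) (w : List ℕ) : wperm (i :: w) = wperm w * s i := by
  simp [wperm]

lemma wperm_append (u v : List ℕ) : wperm (u ++ v) = wperm v * wperm u := by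
  simp [wperm]

lemma s_mul_s_mul_s {i j : ℕ} (h : i + 1 = j ∨ j + 1 = i) : s i * s j * s i = s j * s i * s j := by
  have braid (k : ℕ) : s k * s (k + 1) * s k = s (k + 1) * s k * s (k + 1) := by
    ext x
    simp only [Equiv.Perm.mul_apply, s_apply]
    split_ifs <;> omega
  rcases h with rfl | rfl
  exacts [braid i, (braid j).symm]

lemma s_mul_s_comm {i j : ℕ} (h : i + 2 ≤ j ∨ j + 2 ≤ i) : s i * s j = s j * s i := by
  ext x
  simp only [Equiv.Perm.mul_apply, s_apply]
  split_ifs <;> omega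

lemma s_mul_self (i : ℕ) : s i * s i = 1 := Equiv.swap_mul_self i (i + 1)

lemma isExpr_append {n : ℕ} {u v : List ℕ} : IsExpr n (u ++ v) ↔ IsExpr n u ∧ IsExpr n v :=
  List.forall_mem_append

namespace BraidStep

variable {u v : List ℕ}

lemma wperm_eq (h : BraidStep u v) : wperm u = wperm v := by
  rcases h with ⟨a, b, i, j, h⟩ | ⟨a, b, i, j, h⟩
  · have := congrArg (fun σ => wperm b * σ * wperm a) (s_mul_s_mul_s h)
    simpa only [wperm_append, wperm_cons, mul_assoc] using this
  · simp only [wperm_append, wperm_cons, mul_assoc, s_mul_s_comm h]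

lemma length_eq (h : BraidStep u v) : u.length = v.length := by
  rcases h with ⟨a, b, i, j, _⟩ | ⟨a, b, i, j, _⟩ <;> simp

lemma mem_of_mem (h : BraidStep u v) {x : ℕ} (hx : x ∈ v) : x ∈ u := by
  rcases h with ⟨a, b, i, j, _⟩ | ⟨a, b, i, j, _⟩ <;>
    simp only [List.mem_append, List.mem_cons] at hx ⊢ <;> tauto

lemma symm (h : BraidStep u v) : BraidStep v u := by
  rcases h with ⟨a, b, i, j, h⟩ | ⟨a, b, i, j, h⟩
  · exact Or.inl (StepI.mk a b j i h.symm)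
  · exact Or.inr (StepII.mk a b j i h.symm)

lemma append_append (p q : List ℕ) (h : BraidStep u v) : BraidStep (p ++ u ++ q) (p ++ v ++ q) := by
  rcases h with ⟨a, b, i, j, h⟩ | ⟨a, b, i, j, h⟩
  · exact Or.inl (by simpa using StepI.mk (p ++ a) (b ++ q) i j h)
  · exact Or.inr (by simpa using StepII.mk (p ++ a) (b ++ q) i j h)

end BraidStep

/-- `BraidReach k u v`: `u` can be transformed into `v` by at most `k` braid relations. -/
inductive BraidReach : ℕ → List ℕ → List ℕ → Prop
  | refl (k : ℕ) (u : List ℕ) : BraidReach k u u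
  | head {k : ℕ} {u v w : List ℕ} : BraidStep u v → BraidReach k v w → BraidReach (k + 1) u w

namespace BraidReach

variable {k k₁ k₂ : ℕ} {u v w : List ℕ}

lemma mono (hk : k₁ ≤ k₂) (h : BraidReach k₁ u v) : BraidReach k₂ u v := by
  induction h generalizing k₂ with
  | refl => exact refl _ _
  | head hs _ ih =>
    obtain _ | k₂ := k₂
    · omega
    · exact head hs (ih (Nat.le_of_succ_le_succ hk))

lemma single (h : BraidStep u v) : BraidReach 1 u v := head h (refl 0 v)

lemma trans (h₁ : BraidReach k₁ u v) (h₂ : BraidReach k₂ v w) : BraidReach (k₁ + k₂) u w := by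
  induction h₁ with
  | refl => exact h₂.mono (Nat.le_add_left _ _)
  | head hs _ ih => rw [Nat.add_right_comm]; exact head hs (ih h₂)

lemma symm (h : BraidReach k u v) : BraidReach k v u := by
  induction h with
  | refl => exact refl _ _
  | head hs _ ih => exact ih.trans (single hs.symm)

lemma append_append (p q : List ℕ) (h : BraidReach k u v) :
    BraidReach k (p ++ u ++ q) (p ++ v ++ q) := by
  induction h with
  | refl => exact refl _ _
  | head hs _ ih => exact head (hs.append_append p q) ih

lemma wperm_eq (h : BraidReach k u v) : wperm u = wperm v := by
  induction h with
  | refl => rfl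
  | head hs _ ih => exact hs.wperm_eq.trans ih

lemma length_eq (h : BraidReach k u v) : u.length = v.length := by
  induction h with
  | refl => rfl
  | head hs _ ih => exact hs.length_eq.trans ih

lemma reducedExpr {n : ℕ} (h : BraidReach k u v) (hu : ReducedExpr n u) : ReducedExpr n v := by
  refine ⟨?_, h.length_eq ▸ h.wperm_eq ▸ hu.2⟩
  induction h with
  | refl => exact hu.1
  | head hs _ ih =>
    exact ih ⟨fun x hx => hu.1 x (hs.mem_of_mem hx), hs.length_eq ▸ hs.wperm_eq ▸ hu.2⟩

lemma exists_isDeriv (h : BraidReach k u v) : ∃ c, IsDeriv u v c ∧ c.length ≤ k + 1 := by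
  induction h with
  | refl k u => exact ⟨[u], ⟨List.isChain_singleton u, rfl, rfl⟩, by simp⟩
  | @head k u v w hs _ ih =>
    obtain ⟨_ | ⟨v', c⟩, ⟨hchain, hhead, hlast⟩, hlen⟩ := ih
    · simp at hhead
    obtain rfl : v' = v := by simpa using hhead
    refine ⟨u :: v' :: c, ⟨List.isChain_cons_cons.mpr ⟨hs, hchain⟩, rfl, ?_⟩, by simpa using hlen⟩
    rwa [List.getLast?_cons_cons]

end BraidReach

lemma dist_le_of_braidReach {k : ℕ} {u v : List ℕ} (h : BraidReach k u v) : dist u v ≤ k := by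
  obtain ⟨c, hc, hlen⟩ := h.exists_isDeriv
  have hpos : 0 < c.length := List.length_pos_iff.mpr (by rintro rfl; simp [IsDeriv] at hc)
  have hmem : c.length - 1 ∈ {k | ∃ c, IsDeriv u v c ∧ c.length = k + 1} := ⟨c, hc, by omega⟩
  exact (Nat.sInf_le hmem).trans (by omega)

section Sji

lemma sji_length (j i : ℕ) : (sji j i).length = j - i := by simp [sji]

lemma sji_self (i : ℕ) : sji i i = [] := by simp [sji]

lemma le_and_lt_of_mem_sji {j i y : ℕ} (h : y ∈ sji j i) : i ≤ y ∧ y < j := by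
  simp only [sji, List.mem_map, List.mem_range] at h
  obtain ⟨k, hk, rfl⟩ := h
  omega

lemma sji_split {j e i : ℕ} (hie : i ≤ e) (hej : e ≤ j) : sji j i = sji j e ++ sji e i := by
  unfold sji
  rw [show j - i = (j - e) + (e - i) by omega, List.range_add, List.map_append, List.map_map]
  congr 1
  refine List.map_congr_left fun k hk => ?_
  simp only [List.mem_range] at hk
  simp only [Function.comp_apply]
  omega

lemma sji_succ_self (i : ℕ) : sji (i + 1) i = [i] := by simp [sji]

lemma sji_eq_cons {j i : ℕ} (h : i < j) : sji j i = (j - 1) :: sji (j - 1) i := by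
  obtain ⟨j, rfl⟩ : ∃ j', j = j' + 1 := ⟨j - 1, by omega⟩
  rw [Nat.add_sub_cancel, sji_split (Nat.le_of_lt_succ h) (Nat.le_succ j), sji_succ_self]
  rfl

lemma sji_eq_append {j i : ℕ} (h : i < j) : sji j i = sji j (i + 1) ++ [i] := by
  rw [sji_split (Nat.le_succ i) h, sji_succ_self]

end Sji

section Wperm

variable {k : ℕ} {w : List ℕ}

lemma wperm_apply_of_lt (hw : IsExpr k w) {x : ℕ} (hx : k < x) : wperm w x = x := by
  induction w with
  | nil => rfl
  | cons i w ih =>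
    obtain ⟨⟨hi, hik⟩, hw⟩ := List.forall_mem_cons.mp hw
    rw [wperm_cons, Equiv.Perm.mul_apply, s_apply, if_neg (by omega), if_neg (by omega), ih hw]

lemma wperm_apply_le (hw : IsExpr k w) {x : ℕ} (hx : x ≤ k) : wperm w x ≤ k := by
  induction w generalizing x with
  | nil => exact hx
  | cons i w ih =>
    obtain ⟨⟨hi, hik⟩, hw⟩ := List.forall_mem_cons.mp hw
    rw [wperm_cons, Equiv.Perm.mul_apply]
    exact ih hw (by rw [s_apply]; split_ifs <;> omega)

lemma wperm_sji_apply_self {j i : ℕ} (h : i ≤ j) : wperm (sji j i) j = i := by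
  induction j with
  | zero => obtain rfl := Nat.le_zero.mp h; rfl
  | succ j ih =>
    rcases h.lt_or_eq with h | rfl
    · rw [sji_eq_cons h, wperm_cons, Equiv.Perm.mul_apply, Nat.add_sub_cancel, s_apply,
        if_neg (by omega), if_pos rfl, ih (by omega)]
    · rw [sji_self]; rfl

end Wperm

lemma braidReach_commute_past (x : ℕ) :
    ∀ D : List ℕ, (∀ y ∈ D, x + 2 ≤ y ∨ y + 2 ≤ x) → BraidReach D.length (D ++ [x]) (x :: D)
  | [], _ => .refl 0 [x]
  | y :: D, hD => by
    obtain ⟨hy, hD⟩ := List.forall_mem_cons.mp hD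
    have hpass := (braidReach_commute_past x D hD).append_append [y] []
    simp only [List.singleton_append, List.append_nil] at hpass
    exact hpass.trans (.single (Or.inr (by simpa using StepII.mk [] D y x hy.symm)))

lemma braidReach_sji_append_succ {n d y : ℕ} (hd : d ≤ y) (hy : y + 2 ≤ n) :
    BraidReach (n - d - 1) (sji n d ++ [y + 1]) (y :: sji n d) := by
  set P := sji n (y + 2)
  set Q := sji y d
  have hsplit : sji n d = P ++ (y + 1) :: y :: Q := by
    rw [sji_split (show d ≤ y + 2 by omega) hy, sji_split hd (Nat.le_add_right y 2)]
    simp [sji, show y + 2 - y = 2 by omega, List.range_succ, P, Q]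
  have h₁ : BraidReach Q.length (sji n d ++ [y + 1]) (P ++ (y + 1) :: y :: (y + 1) :: Q) := by
    have hQ := (braidReach_commute_past (y + 1) Q fun z hz => by
      have := le_and_lt_of_mem_sji hz; omega).append_append (P ++ [y + 1, y]) []
    simpa [hsplit] using hQ
  have h₂ : BraidReach 1 (P ++ (y + 1) :: y :: (y + 1) :: Q) (P ++ y :: (y + 1) :: y :: Q) :=
    .single (Or.inl (StepI.mk P Q (y + 1) y (Or.inr rfl)))
  have h₃ : BraidReach P.length (P ++ y :: (y + 1) :: y :: Q) (y :: sji n d) := by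
    have hP := (braidReach_commute_past y P fun z hz => by
      have := le_and_lt_of_mem_sji hz; omega).append_append [] ((y + 1) :: y :: Q)
    simpa [hsplit] using hP
  exact ((h₁.trans h₂).trans h₃).mono (by simp only [P, Q, sji_length]; omega)

section Inversions

variable {n : ℕ}

lemma mem_invSet {π : Equiv.Perm ℕ} {p q : ℕ} :
    (p, q) ∈ invSet n π ↔ (1 ≤ p ∧ p ≤ n) ∧ (1 ≤ q ∧ q ≤ n) ∧ p < q ∧ π q < π p := by
  simp [invSet, and_assoc]

lemma invSet_s_mul_subset (i : ℕ) (π : Equiv.Perm ℕ) :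
    invSet n (s i * π) ⊆ insert (π⁻¹ i, π⁻¹ (i + 1)) (invSet n π) := by
  rintro ⟨p, q⟩ hpq
  rw [mem_invSet] at hpq
  obtain ⟨hp, hq, hlt, hinv⟩ := hpq
  by_cases hπ : π q < π p
  · exact Finset.mem_insert_of_mem (mem_invSet.mpr ⟨hp, hq, hlt, hπ⟩)
  have hne : π p ≠ π q := π.injective.ne hlt.ne
  have hswap : π p = i ∧ π q = i + 1 := by
    simp only [Equiv.Perm.mul_apply, s_apply] at hinv
    split_ifs at hinv <;> omega
  obtain ⟨rfl, hq⟩ := hswap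
  simp only [← hq, Equiv.Perm.coe_inv, Equiv.symm_apply_apply, Finset.mem_insert, true_or]

lemma card_invSet_wperm_mul_le (w : List ℕ) (σ : Equiv.Perm ℕ) :
    (invSet n (wperm w * σ)).card ≤ (invSet n σ).card + w.length := by
  induction w generalizing σ with
  | nil => simp [wperm]
  | cons i w ih =>
    have hstep : (invSet n (s i * σ)).card ≤ (invSet n σ).card + 1 :=
      (Finset.card_le_card (invSet_s_mul_subset i σ)).trans (Finset.card_insert_le _ _)
    rw [wperm_cons, mul_assoc, List.length_cons]
    linarith [ih (s i * σ)]

lemma card_invSet_wperm_le (w : List ℕ) : (invSet n (wperm w)).card ≤ w.length := by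
  have hone : invSet n 1 = ∅ := by
    ext ⟨p, q⟩
    simp only [mem_invSet, Equiv.Perm.one_apply, Finset.notMem_empty, iff_false]
    omega
  simpa [hone] using card_invSet_wperm_mul_le (n := n) w 1

lemma invSet_wperm_of_isExpr {k : ℕ} {w : List ℕ} (hw : IsExpr k w) (hkn : k ≤ n) :
    invSet n (wperm w) = invSet k (wperm w) := by
  ext ⟨p, q⟩
  simp only [mem_invSet]
  constructor
  · rintro ⟨⟨hp, -⟩, ⟨hq, -⟩, hlt, hinv⟩
    have hqk : q ≤ k := by
      by_contra! hqk
      rw [wperm_apply_of_lt hw hqk] at hinv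
      rcases le_or_gt p k with hpk | hpk
      · linarith [wperm_apply_le hw hpk]
      · rw [wperm_apply_of_lt hw hpk] at hinv
        omega
    exact ⟨⟨hp, by omega⟩, ⟨hq, hqk⟩, hlt, hinv⟩
  · rintro ⟨⟨hp, hpk⟩, ⟨hq, hqk⟩, hlt, hinv⟩
    exact ⟨⟨hp, by omega⟩, ⟨hq, by omega⟩, hlt, hinv⟩

lemma ReducedExpr.of_isExpr {k : ℕ} {w : List ℕ} (h : ReducedExpr n w) (hk : IsExpr k w) :
    ReducedExpr k w := by
  refine ⟨hk, h.2.trans ?_⟩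
  rcases le_total k n with hkn | hnk
  · rw [invSet_wperm_of_isExpr hk hkn]
  · rw [invSet_wperm_of_isExpr h.1 hnk]

lemma ReducedExpr.of_append_left {u v : List ℕ} (h : ReducedExpr n (u ++ v)) : ReducedExpr n u := by
  refine ⟨(isExpr_append.mp h.1).1, le_antisymm ?_ (card_invSet_wperm_le u)⟩
  have hlen := h.2
  rw [wperm_append, List.length_append] at hlen
  linarith [card_invSet_wperm_mul_le (n := n) v (wperm u), card_invSet_wperm_le (n := n) v]

lemma not_reducedExpr_square (p q : List ℕ) (d : ℕ) : ¬ ReducedExpr n (p ++ d :: d :: q) := by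
  intro h
  have hperm : wperm (p ++ d :: d :: q) = wperm (p ++ q) := by
    rw [wperm_append, wperm_append, wperm_cons, wperm_cons, mul_assoc (wperm q), s_mul_self,
      mul_one]
  have hlen := h.2
  rw [hperm] at hlen
  have := card_invSet_wperm_le (n := n) (p ++ q)
  simp only [List.length_append, List.length_cons] at hlen this
  omega

end Inversions

section Extraction

variable {n : ℕ}

lemma exists_braidReach_append_sji_step {a b : List ℕ} {d x : ℕ} (hd : 1 ≤ d) (hdn : d ≤ n)
    (ha : IsExpr (n - 1) a) (hred : ReducedExpr n (a ++ sji n d ++ x :: b)) :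
    ∃ a' d', 1 ≤ d' ∧ d' ≤ n ∧ IsExpr (n - 1) a' ∧
      BraidReach (n - 2) (a ++ sji n d ++ x :: b) (a' ++ sji n d' ++ b) := by
  have hx : 1 ≤ x ∧ x + 1 ≤ n := hred.1 x (by simp)
  have pass : ∀ {x' k}, 1 ≤ x' → x' + 1 ≤ n - 1 → k ≤ n - 2 →
      BraidReach k (sji n d ++ [x]) (x' :: sji n d) →
      ∃ a' d', 1 ≤ d' ∧ d' ≤ n ∧ IsExpr (n - 1) a' ∧
        BraidReach (n - 2) (a ++ sji n d ++ x :: b) (a' ++ sji n d' ++ b) := by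
    intro x' k hx'1 hx'n hk hreach
    refine ⟨a ++ [x'], d, hd, hdn, isExpr_append.mpr ⟨ha, ?_⟩, ?_⟩
    · simpa [IsExpr] using ⟨hx'1, hx'n⟩
    · simpa using (hreach.append_append a b).mono hk
  rcases (show x + 2 ≤ d ∨ x + 1 = d ∨ x = d ∨ d < x by omega) with h | rfl | rfl | h
  · have hpast := braidReach_commute_past x (sji n d) fun y hy =>
      Or.inl ((le_and_lt_of_mem_sji hy).1.trans' h)
    exact pass hx.1 (by omega) (by rw [sji_length]; omega) hpast
  · refine ⟨a, x, hx.1, Nat.le_of_succ_le hx.2, ha, ?_⟩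
    rw [sji_eq_append (Nat.lt_of_succ_le hdn)]
    simpa using BraidReach.refl (n - 2) (a ++ sji n (x + 1) ++ x :: b)
  · rw [sji_eq_append (by omega)] at hred
    exact absurd (by simpa using hred) (not_reducedExpr_square (a ++ sji n (x + 1)) b x)
  · obtain ⟨y, rfl⟩ : ∃ y, x = y + 1 := ⟨x - 1, by omega⟩
    exact pass (by omega) (by omega) (by omega) (braidReach_sji_append_succ (by omega) hx.2)

lemma exists_braidReach_append_sji_of_append (b : List ℕ) :
    ∀ {a : List ℕ} {d : ℕ}, 1 ≤ d → d ≤ n → IsExpr (n - 1) a → ReducedExpr n (a ++ sji n d ++ b) →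
      ∃ a' d', d' ≤ n ∧ IsExpr (n - 1) a' ∧
        BraidReach ((n - 2) * b.length) (a ++ sji n d ++ b) (a' ++ sji n d') := by
  induction b with
  | nil => exact fun {a d} _ hdn ha _ => ⟨a, d, hdn, ha, by simpa using .refl _ _⟩
  | cons x b ih =>
    intro a d hd hdn ha hred
    obtain ⟨a₁, d₁, hd₁, hd₁n, ha₁, hstep⟩ := exists_braidReach_append_sji_step hd hdn ha hred
    obtain ⟨a', d', hd'n, ha', hrest⟩ := ih hd₁ hd₁n ha₁ (hstep.reducedExpr hred)
    refine ⟨a', d', hd'n, ha', (hstep.trans hrest).mono ?_⟩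
    rw [List.length_cons, Nat.mul_succ, Nat.add_comm]

lemma exists_braidReach_append_sji {w : List ℕ} (hn : 1 ≤ n) (hw : ReducedExpr n w) :
    ∃ a, IsExpr (n - 1) a ∧ BraidReach ((n - 2) * w.length) w (a ++ sji n (wperm w n)) := by
  obtain ⟨a, d, hdn, ha, hreach⟩ :=
    exists_braidReach_append_sji_of_append w (a := []) hn le_rfl (by simp [IsExpr])
      (by simpa [sji_self] using hw)
  simp only [sji_self, List.nil_append] at hreach
  have hd : wperm w n = d := by
    rw [hreach.wperm_eq, wperm_append, Equiv.Perm.mul_apply,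
      wperm_apply_of_lt ha (by omega), wperm_sji_apply_self hdn]
  exact ⟨a, ha, hd ▸ hreach⟩

end Extraction

theorem braidReach_of_reducedExpr (n : ℕ) {u v : List ℕ} (hu : ReducedExpr n u)
    (hv : ReducedExpr n v) (heq : wperm u = wperm v) :
    BraidReach ((n - 1) * (n - 2) * u.length) u v := by
  induction n generalizing u v with
  | zero =>
    have hnil (w : List ℕ) (hw : IsExpr 0 w) : w = [] :=
      List.eq_nil_iff_forall_not_mem.mpr fun i hi => by have := hw i hi; omega
    rw [hnil u hu.1, hnil v hv.1]
    exact .refl _ _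
  | succ n ih =>
    obtain ⟨au, hau, hu'⟩ := exists_braidReach_append_sji n.succ_pos hu
    obtain ⟨av, hav, hv'⟩ := exists_braidReach_append_sji n.succ_pos hv
    rw [← heq] at hv'
    set t := sji (n + 1) (wperm u (n + 1))
    have hredu : ReducedExpr n au := (hu'.reducedExpr hu).of_append_left.of_isExpr hau
    have hredv : ReducedExpr n av := (hv'.reducedExpr hv).of_append_left.of_isExpr hav
    have hperm : wperm au = wperm av := by
      refine mul_left_cancel (a := wperm t) ?_
      rw [← wperm_append, ← wperm_append, ← hu'.wperm_eq, ← hv'.wperm_eq, heq]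
    have hlen : v.length = u.length := by rw [hu.2, hv.2, heq]
    have hlen_au : au.length ≤ u.length := by
      rw [hu'.length_eq, List.length_append]; omega
    have hmid := (ih hredu hredv hperm).append_append [] t
    rw [List.nil_append, List.nil_append] at hmid
    refine (hu'.trans (hmid.trans hv'.symm)).mono ?_
    rw [hlen, show n + 1 - 2 = n - 1 by omega, Nat.add_sub_cancel]
    calc (n - 1) * u.length + ((n - 1) * (n - 2) * au.length + (n - 1) * u.length)
        ≤ (n - 1) * u.length + ((n - 1) * (n - 2) * u.length + (n - 1) * u.length) := by gcongr
      _ = n * (n - 1) * u.length := by rcases n with _ | _ | n <;> simp; ring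

theorem dist_le_of_reduced_general (n ℓ : ℕ) (u v : List ℕ)
    (hu : ReducedExpr n u) (hv : ReducedExpr n v)
    (hlu : u.length = ℓ)
    (heq : wperm u = wperm v) :
    dist u v ≤ (n - 1) * (n - 2) * ℓ :=
  hlu ▸ dist_le_of_braidReach (braidReach_of_reducedExpr n hu hv heq)

/-- For all equivalent reduced `n`-expressions `u, v` of length `ℓ`,
`dist(u,v) ≤ (n-1)(n-2)ℓ`. -/
theorem dist_le_of_reduced (n ℓ : ℕ) (u v : List ℕ)
    (hu : ReducedExpr n u) (hv : ReducedExpr n v)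
    (hlu : u.length = ℓ) (hlv : v.length = ℓ)
    (heq : wperm u = wperm v) :
    dist u v ≤ (n - 1) * (n - 2) * ℓ :=
  dist_le_of_reduced_general n ℓ u v hu hv hlu heq

end
end

section
/- Applying a single braid relation of type s_i s_{i+1} s_i = s_{i+1} s_i s_{i+1} to a reduced n-expression u, yielding v, gives I₃(S(u),S(v)) = 1 and I₂,₂(S(u),S(v)) = 0; applying a single commutation s_i s_j = s_j s_i with |i-j| ≥ 2 gives I₃(S(u),S(v)) = 0 and I₂,₂(S(u),S(v)) = 1. -/
/-!
The names of a reduced word are pairwise distinct: every inversion `{p, q}` of its permutation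
is the name of some crossing, and there are exactly as many crossings as inversions. A braid move
or a commutation replaces a block of consecutive names by its reverse and leaves the rest of the
sequence in place, so the pairs of entries whose relative order changes are exactly the pairs of
distinct entries of that block. For a braid move the block is `{p, q}, {p, r}, {q, r}`: its
entries lie in exactly one triple and no two of them are disjoint. For a commutation it consists
of two disjoint pairs, which lie in no triple and form exactly one pair of disjoint pairs.
-/

open scoped Classical

noncomputable section

lemma wperm_nil : wperm [] = 1 := rfl

lemma s_inv (i : ℕ) : (s i)⁻¹ = s i := Equiv.swap_inv _ _

lemma wperm_braid (i : ℕ) : wperm [i, i + 1, i] = wperm [i + 1, i, i + 1] := by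
  ext x
  simp only [wperm_cons, wperm_nil, one_mul, Equiv.Perm.mul_apply, s_apply]
  split_ifs <;> omega

lemma wperm_comm {i j : ℕ} (h : i + 2 ≤ j ∨ j + 2 ≤ i) : wperm [i, j] = wperm [j, i] := by
  ext x
  simp only [wperm_cons, wperm_nil, one_mul, Equiv.Perm.mul_apply, s_apply]
  split_ifs <;> omega

lemma IsExpr.wperm_mem_Icc_iff {n : ℕ} {w : List ℕ} (hw : IsExpr n w) (x : ℕ) :
    wperm w x ∈ Finset.Icc 1 n ↔ x ∈ Finset.Icc 1 n := by
  induction w generalizing x with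
  | nil => rfl
  | cons i w ih =>
    have hi := hw i List.mem_cons_self
    rw [wperm_cons, Equiv.Perm.mul_apply, ih (fun j hj => hw j (List.mem_cons_of_mem i hj)),
      s_apply]
    simp only [Finset.mem_Icc]
    split_ifs <;> omega

lemma IsExpr.wperm_inv_mem_Icc {n : ℕ} {w : List ℕ} (hw : IsExpr n w) {x : ℕ}
    (hx : x ∈ Finset.Icc 1 n) : (wperm w)⁻¹ x ∈ Finset.Icc 1 n :=
  (hw.wperm_mem_Icc_iff _).mp (by simpa using hx)

lemma namesAux_length (π : Equiv.Perm ℕ) (w : List ℕ) : (namesAux π w).length = w.length := by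
  induction w generalizing π with
  | nil => rfl
  | cons i w ih => simp [namesAux, ih]

lemma namesAux_append (π : Equiv.Perm ℕ) (w w' : List ℕ) :
    namesAux π (w ++ w') = namesAux π w ++ namesAux (wperm w * π) w' := by
  induction w generalizing π with
  | nil => simp [namesAux, wperm_nil]
  | cons i w ih => simp [namesAux, ih, wperm_cons, mul_assoc]

lemma names_append (a m b : List ℕ) :
    names (a ++ (m ++ b)) =
      names a ++ namesAux (wperm a) m ++ namesAux (wperm m * wperm a) b := by
  rw [names, namesAux_append, namesAux_append, mul_one, names, List.append_assoc]

lemma namesAux_braid (π : Equiv.Perm ℕ) (i : ℕ) :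
    namesAux π [i, i + 1, i] =
      [{π⁻¹ i, π⁻¹ (i + 1)}, {π⁻¹ i, π⁻¹ (i + 2)}, {π⁻¹ (i + 1), π⁻¹ (i + 2)}] := by
  simp [namesAux, s_inv, s_apply, show i + 1 + 1 ≠ i by omega, show i ≠ i + 1 + 1 by omega]

lemma namesAux_braid_reverse (π : Equiv.Perm ℕ) (i : ℕ) :
    namesAux π [i + 1, i, i + 1] = (namesAux π [i, i + 1, i]).reverse := by
  simp [namesAux, s_inv, s_apply, Finset.pair_comm, show i + 1 + 1 ≠ i by omega,
    show i ≠ i + 1 + 1 by omega]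

lemma namesAux_comm (π : Equiv.Perm ℕ) {i j : ℕ} (h : i + 2 ≤ j ∨ j + 2 ≤ i) :
    namesAux π [i, j] = [{π⁻¹ i, π⁻¹ (i + 1)}, {π⁻¹ j, π⁻¹ (j + 1)}] := by
  have : j ≠ i ∧ j ≠ i + 1 ∧ j + 1 ≠ i ∧ j + 1 ≠ i + 1 := by omega
  simp [namesAux, s_inv, s_apply, this]

lemma pair_mem_namesAux {w : List ℕ} (π : Equiv.Perm ℕ) {p q : ℕ} (hpq : π p < π q)
    (hqp : (wperm w * π) q < (wperm w * π) p) : ({p, q} : Finset ℕ) ∈ namesAux π w := by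
  induction w generalizing π with
  | nil => simp only [wperm_nil, one_mul] at hqp; omega
  | cons i w ih =>
    rw [wperm_cons, mul_assoc] at hqp
    by_cases hc : π p = i ∧ π q = i + 1
    · have hp : π⁻¹ i = p := by simp [← hc.1]
      have hq : π⁻¹ (i + 1) = q := by simp [← hc.2]
      simp [namesAux, hp, hq]
    · refine List.mem_cons_of_mem _ (ih (s i * π) ?_ hqp)
      simp only [Equiv.Perm.mul_apply, s_apply]
      split_ifs <;> omega

lemma ReducedExpr.nodup_names {n : ℕ} {u : List ℕ} (hu : ReducedExpr n u) :
    (names u).Nodup := by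
  have hsub : (invSet n (wperm u)).image (fun pq => ({pq.1, pq.2} : Finset ℕ)) ⊆
      (names u).toFinset := by
    simp only [Finset.image_subset_iff, invSet, Finset.mem_filter, List.mem_toFinset]
    rintro ⟨p, q⟩ ⟨-, hpq, hqp⟩
    exact pair_mem_namesAux 1 hpq (by simpa using hqp)
  have hinj :
      Set.InjOn (fun pq : ℕ × ℕ => ({pq.1, pq.2} : Finset ℕ)) (invSet n (wperm u)) := by
    rintro ⟨p, q⟩ hpq ⟨p', q'⟩ hpq' he
    simp only [invSet, Finset.coe_filter, Set.mem_ofPred_eq] at hpq hpq'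
    have := congrArg (fun x : Finset ℕ => (x : Set ℕ)) he
    simp only [Finset.coe_pair, Set.pair_eq_pair_iff] at this
    ext <;> simp <;> omega
  rw [← Multiset.coe_nodup, ← Multiset.toFinset_card_eq_card_iff_nodup]
  refine le_antisymm (List.toFinset_card_le _) ?_
  calc (names u).length = (invSet n (wperm u)).card := (namesAux_length 1 u).trans hu.2
    _ = ((invSet n (wperm u)).image (fun pq => ({pq.1, pq.2} : Finset ℕ))).card :=
      (Finset.card_image_of_injOn hinj).symm
    _ ≤ _ := Finset.card_le_card hsub

theorem List.Nodup.idxOf_reverse_add_idxOf {α : Type*} [BEq α] [LawfulBEq α] {M : List α}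
    (h : M.Nodup) {c : α} (hc : c ∈ M) : M.reverse.idxOf c + M.idxOf c + 1 = M.length := by
  have hk : M.idxOf c < M.length := List.idxOf_lt_length_of_mem hc
  have hrev : M.reverse[M.length - 1 - M.idxOf c]'(by simp; omega) = c := by
    rw [List.getElem_reverse]
    simp only [show M.length - 1 - (M.length - 1 - M.idxOf c) = M.idxOf c by omega,
      List.getElem_idxOf]
  have := (List.nodup_reverse.mpr h).idxOf_getElem (M.length - 1 - M.idxOf c) (by simp; omega)
  rw [hrev] at this
  omega

lemma not_sameOrder_append_reverse_iff {A M T : List (Finset ℕ)} (hnd : (A ++ M ++ T).Nodup)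
    (a b : Finset ℕ) :
    ¬ sameOrder (A ++ M ++ T) (A ++ M.reverse ++ T) a b ↔ a ∈ M ∧ b ∈ M ∧ a ≠ b := by
  obtain ⟨hAM, -, -⟩ := List.nodup_append.mp hnd
  obtain ⟨-, hM, hAM⟩ := List.nodup_append.mp hAM
  have hout : ∀ c ∉ M, (A ++ M.reverse ++ T).idxOf c = (A ++ M ++ T).idxOf c ∧
      ((A ++ M ++ T).idxOf c < A.length ∨ A.length + M.length ≤ (A ++ M ++ T).idxOf c) := by
    intro c hc
    by_cases hcA : c ∈ A
    · simp [List.idxOf_append, hcA, List.idxOf_lt_length_of_mem]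
    · simp [List.idxOf_append, hc, hcA]
      omega
  have hin : ∀ c ∈ M, (A ++ M ++ T).idxOf c = M.idxOf c + A.length ∧
      (A ++ M.reverse ++ T).idxOf c + M.idxOf c + 1 = M.length + A.length := fun c hc => by
    have hcA : c ∉ A := fun h => hAM c h c hc rfl
    have := hM.idxOf_reverse_add_idxOf hc
    simp [List.idxOf_append, hc, hcA]
    omega
  unfold sameOrder
  by_cases ha : a ∈ M <;> by_cases hb : b ∈ M
  · have := List.idxOf_inj ha (y := b)
    grind
  all_goals grind

lemma IsExpr.pair_subset_Icc_of_mem {n : ℕ} {a w : List ℕ} (hu : IsExpr n (a ++ w)) {i : ℕ}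
    (hi : i ∈ w) : {(wperm a)⁻¹ i, (wperm a)⁻¹ (i + 1)} ⊆ Finset.Icc 1 n := by
  have ha : IsExpr n a := fun k hk => hu k (List.mem_append_left _ hk)
  have := hu i (List.mem_append_right _ hi)
  simp only [Finset.insert_subset_iff, Finset.singleton_subset_iff]
  exact ⟨ha.wperm_inv_mem_Icc (by simp; omega), ha.wperm_inv_mem_Icc (by simp; omega)⟩

lemma exists_names_eq_of_stepI {n : ℕ} {u v : List ℕ} (hu : IsExpr n u) (h : StepI u v) :
    ∃ (A T : List (Finset ℕ)) (p q r : ℕ), {p, q, r} ⊆ Finset.Icc 1 n ∧ p ≠ q ∧ p ≠ r ∧ q ≠ r ∧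
      names u = A ++ [{p, q}, {p, r}, {q, r}] ++ T ∧
      names v = A ++ [{p, q}, {p, r}, {q, r}].reverse ++ T := by
  obtain ⟨a, b, i, j, hij⟩ := h
  have hi := hu.pair_subset_Icc_of_mem (i := i) (by simp)
  have hj := hu.pair_subset_Icc_of_mem (i := j) (by simp)
  simp only [Finset.insert_subset_iff, Finset.singleton_subset_iff] at hi hj ⊢
  rcases hij with rfl | rfl
  · refine ⟨names a, namesAux (wperm [i, i + 1, i] * wperm a) b, (wperm a)⁻¹ i,
      (wperm a)⁻¹ (i + 1), (wperm a)⁻¹ (i + 2), ?_, by simp, by simp, by simp, ?_, ?_⟩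
    · exact ⟨hi.1, hj.1, hj.2⟩
    · rw [show a ++ i :: (i + 1) :: i :: b = a ++ ([i, i + 1, i] ++ b) from rfl, names_append,
        namesAux_braid]
    · rw [show a ++ (i + 1) :: i :: (i + 1) :: b = a ++ ([i + 1, i, i + 1] ++ b) from rfl,
        names_append, namesAux_braid_reverse, namesAux_braid, wperm_braid]
  · refine ⟨names a, namesAux (wperm [j, j + 1, j] * wperm a) b, (wperm a)⁻¹ (j + 2),
      (wperm a)⁻¹ (j + 1), (wperm a)⁻¹ j, ?_, by simp, by simp, by simp, ?_, ?_⟩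
    · exact ⟨hi.2, hi.1, hj.1⟩
    · rw [show a ++ (j + 1) :: j :: (j + 1) :: b = a ++ ([j + 1, j, j + 1] ++ b) from rfl,
        names_append, namesAux_braid_reverse, namesAux_braid, wperm_braid]
      simp [Finset.pair_comm]
    · rw [show a ++ j :: (j + 1) :: j :: b = a ++ ([j, j + 1, j] ++ b) from rfl,
        names_append, namesAux_braid]
      simp [Finset.pair_comm]

lemma exists_names_eq_of_stepII {n : ℕ} {u v : List ℕ} (hu : IsExpr n u) (h : StepII u v) :
    ∃ (A T : List (Finset ℕ)) (X Y : Finset ℕ), X ∈ (Finset.Icc 1 n).powersetCard 2 ∧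
      Y ∈ (Finset.Icc 1 n).powersetCard 2 ∧ Disjoint X Y ∧
      names u = A ++ [X, Y] ++ T ∧ names v = A ++ [X, Y].reverse ++ T := by
  obtain ⟨a, b, i, j, hij⟩ := h
  have hi := hu.pair_subset_Icc_of_mem (i := i) (by simp)
  have hj := hu.pair_subset_Icc_of_mem (i := j) (by simp)
  refine ⟨names a, namesAux (wperm [i, j] * wperm a) b, {(wperm a)⁻¹ i, (wperm a)⁻¹ (i + 1)},
      {(wperm a)⁻¹ j, (wperm a)⁻¹ (j + 1)}, ?_, ?_, ?_, ?_, ?_⟩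
  · exact Finset.mem_powersetCard.mpr ⟨hi, Finset.card_pair (by simp)⟩
  · exact Finset.mem_powersetCard.mpr ⟨hj, Finset.card_pair (by simp)⟩
  · simp
    omega
  · rw [show a ++ i :: j :: b = a ++ ([i, j] ++ b) from rfl, names_append, namesAux_comm _ hij]
  · rw [show a ++ j :: i :: b = a ++ ([j, i] ++ b) from rfl, names_append,
      namesAux_comm _ hij.symm, wperm_comm hij.symm]
    rfl

section Counting

variable {S S' : List (Finset ℕ)}

lemma I3_eq_one_of_triangle {n p q r : ℕ} (hpqr : {p, q, r} ⊆ Finset.Icc 1 n)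
    (hpq : p ≠ q) (hpr : p ≠ r) (hqr : q ≠ r)
    (hflip : ∀ a b, ¬ sameOrder S S' a b ↔
      a ∈ [{p, q}, {p, r}, {q, r}] ∧ b ∈ [{p, q}, {p, r}, {q, r}] ∧ a ≠ b) :
    I3 n S S' = 1 := by
  have hcard : ({p, q, r} : Finset ℕ).card = 3 :=
    Finset.card_eq_three.mpr ⟨p, q, r, hpq, hpr, hqr, rfl⟩
  rw [I3, Finset.card_eq_one]
  refine ⟨{p, q, r}, Finset.ext fun t => ?_⟩
  simp only [Finset.mem_filter, Finset.mem_powersetCard, Finset.mem_singleton, not_forall, hflip]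
  constructor
  · rintro ⟨⟨-, ht⟩, a, ⟨ha, -⟩, b, ⟨hb, -⟩, haM, hbM, hab⟩
    have hsub : {p, q, r} ⊆ t := by
      simp only [List.mem_cons, List.not_mem_nil, or_false] at haM hbM
      rcases haM with rfl | rfl | rfl <;> rcases hbM with rfl | rfl | rfl <;>
        simp_all [Finset.insert_subset_iff]
    exact (Finset.eq_of_subset_of_card_le hsub (by rw [ht, hcard])).symm
  · rintro rfl
    refine ⟨⟨hpqr, hcard⟩, {p, q}, ⟨by simp [Finset.insert_subset_iff], Finset.card_pair hpq⟩,
      {p, r}, ⟨by simp [Finset.insert_subset_iff], Finset.card_pair hpr⟩, by simp, by simp, ?_⟩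
    intro h
    have : q ∈ ({p, r} : Finset ℕ) := h ▸ by simp
    simp_all

lemma I22_eq_zero_of_triangle {n p q r : ℕ}
    (hflip : ∀ a b, ¬ sameOrder S S' a b ↔
      a ∈ [{p, q}, {p, r}, {q, r}] ∧ b ∈ [{p, q}, {p, r}, {q, r}] ∧ a ≠ b) :
    I22 n S S' = 0 := by
  rw [I22, Finset.card_eq_zero, Finset.filter_eq_empty_iff]
  rintro W - ⟨hdisj, hW⟩
  simp only [not_forall, hflip] at hW
  obtain ⟨a, ha, b, hb, haM, hbM, hab⟩ := hW
  have hd := hdisj a ha b hb hab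
  simp only [List.mem_cons, List.not_mem_nil, or_false] at haM hbM
  rcases haM with rfl | rfl | rfl <;> rcases hbM with rfl | rfl | rfl <;>
    first | exact hab rfl | simp at hd

lemma I3_eq_zero_of_disjoint {n : ℕ} {X Y : Finset ℕ} (hX : X.card = 2) (hY : Y.card = 2)
    (hXY : Disjoint X Y)
    (hflip : ∀ a b, ¬ sameOrder S S' a b ↔ a ∈ [X, Y] ∧ b ∈ [X, Y] ∧ a ≠ b) :
    I3 n S S' = 0 := by
  rw [I3, Finset.card_eq_zero, Finset.filter_eq_empty_iff]
  intro t ht hflipt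
  simp only [not_forall, hflip, Finset.mem_powersetCard] at ht hflipt
  obtain ⟨a, ⟨ha, -⟩, b, ⟨hb, -⟩, haM, hbM, hab⟩ := hflipt
  have hsub : X ∪ Y ⊆ t := by
    simp only [List.mem_cons, List.not_mem_nil, or_false] at haM hbM
    rcases haM with rfl | rfl <;> rcases hbM with rfl | rfl <;> simp_all [Finset.union_subset_iff]
  have := Finset.card_le_card hsub
  rw [Finset.card_union_of_disjoint hXY] at this
  omega

lemma I22_eq_one_of_disjoint {n : ℕ} {X Y : Finset ℕ} (hX : X ∈ (Finset.Icc 1 n).powersetCard 2)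
    (hY : Y ∈ (Finset.Icc 1 n).powersetCard 2) (hXY : Disjoint X Y)
    (hflip : ∀ a b, ¬ sameOrder S S' a b ↔ a ∈ [X, Y] ∧ b ∈ [X, Y] ∧ a ≠ b) :
    I22 n S S' = 1 := by
  have hne : X ≠ Y := by
    rintro rfl
    rw [disjoint_self, Finset.bot_eq_empty] at hXY
    simp [hXY] at hX
  rw [I22, Finset.card_eq_one]
  refine ⟨{X, Y}, Finset.ext fun W => ?_⟩
  simp only [Finset.mem_filter, Finset.mem_singleton, not_forall, hflip]
  constructor
  · rintro ⟨hW, -, a, ha, b, hb, haM, hbM, hab⟩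
    have hsub : {X, Y} ⊆ W := by
      simp only [List.mem_cons, List.not_mem_nil, or_false] at haM hbM
      rcases haM with rfl | rfl <;> rcases hbM with rfl | rfl <;>
        simp_all [Finset.insert_subset_iff]
    exact (Finset.eq_of_subset_of_card_le hsub
      (by rw [(Finset.mem_powersetCard.mp hW).2, Finset.card_pair hne])).symm
  · rintro rfl
    refine ⟨Finset.mem_powersetCard.mpr ⟨by simp [Finset.insert_subset_iff, hX, hY],
      Finset.card_pair hne⟩, ?_, X, by simp, Y, by simp, by simp, by simp, hne⟩
    simp only [Finset.mem_insert, Finset.mem_singleton]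
    rintro a (rfl | rfl) b (rfl | rfl) hab <;> simp_all [disjoint_comm]

end Counting

/-- A single type I relation gives `I₃ = 1`, `I₂,₂ = 0`; a single commutation gives
`I₃ = 0`, `I₂,₂ = 1`. -/
theorem I3_I22_single_step (n : ℕ) (u v : List ℕ) (hu : ReducedExpr n u) :
    (StepI u v → I3 n (names u) (names v) = 1 ∧ I22 n (names u) (names v) = 0) ∧
    (StepII u v → I3 n (names u) (names v) = 0 ∧ I22 n (names u) (names v) = 1) := by
  have hnd := hu.nodup_names
  refine ⟨fun h => ?_, fun h => ?_⟩
  · obtain ⟨A, T, p, q, r, hpqr, hpq, hpr, hqr, hnu, hnv⟩ := exists_names_eq_of_stepI hu.1 h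
    rw [hnu] at hnd
    rw [hnu, hnv]
    exact ⟨I3_eq_one_of_triangle hpqr hpq hpr hqr (not_sameOrder_append_reverse_iff hnd),
      I22_eq_zero_of_triangle (not_sameOrder_append_reverse_iff hnd)⟩
  · obtain ⟨A, T, X, Y, hX, hY, hXY, hnu, hnv⟩ := exists_names_eq_of_stepII hu.1 h
    rw [hnu] at hnd
    rw [hnu, hnv]
    exact ⟨I3_eq_zero_of_disjoint (Finset.mem_powersetCard.mp hX).2
      (Finset.mem_powersetCard.mp hY).2 hXY (not_sameOrder_append_reverse_iff hnd),
      I22_eq_one_of_disjoint hX hY hXY (not_sameOrder_append_reverse_iff hnd)⟩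

end
end
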